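/- arXiv:2305.04058 — 7 statements merged into one kernel-verified Lean document; each statement's English description precedes it below -/
import Mathlib

section
/- In a friendship digraph, every vertex v satisfies d⁺(v) = d⁻(v). -/
open Finset

/-! Sending an in-neighbour `x` of `v` to the common out-neighbour of `x` and `v` is injective:
two in-neighbours with the same image `w` would have both `v` and `w` as common out-neighbours,
forcing `w = v` and hence a loop at `v`. So `d⁻(v) ≤ d⁺(v)` at every vertex, and since both
degree sums count the arcs, equality holds everywhere. -/

section FriendshipDigraph

variable {V : Type*} [Fintype V] (D : V → V → Prop) [DecidableRel D]

theorem sum_card_outNeighbors_eq_sum_card_inNeighbors :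
    ∑ v, #{w | D v w} = ∑ v, #{w | D w v} :=
  sum_card_bipartiteAbove_eq_sum_card_bipartiteBelow D

theorem card_inNeighbors_le_card_outNeighbors (irrefl : ∀ v, ¬ D v v)
    (friendship : ∀ u v : V, u ≠ v → ∃! w, D u w ∧ D v w) (v : V) :
    #{w | D w v} ≤ #{w | D v w} := by
  refine card_le_card_of_forall_subsingleton D (fun x hx => ?_) (fun w hw => ?_)
  · have hxv : x ≠ v := by
      rintro rfl
      exact irrefl x (mem_filter.1 hx).2
    obtain ⟨w, ⟨hxw, hvw⟩, -⟩ := friendship x v hxv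
    exact ⟨w, mem_filter.2 ⟨mem_univ w, hvw⟩, hxw⟩
  · rintro x ⟨hx, hxw⟩ y ⟨hy, hyw⟩
    by_contra hxy
    have hwv : w = v :=
      (friendship x y hxy).unique ⟨hxw, hyw⟩ ⟨(mem_filter.1 hx).2, (mem_filter.1 hy).2⟩
    exact irrefl v (hwv ▸ (mem_filter.1 hw).2)

end FriendshipDigraph

theorem friendship_digraph_outdeg_eq_indeg_general
    {V : Type*} [Fintype V] (D : V → V → Prop) [DecidableRel D]
    (irrefl : ∀ v : V, ¬ D v v)
    (friendship : ∀ u v : V, u ≠ v → ∃! w : V, D u w ∧ D v w) :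
    ∀ v : V, (univ.filter (fun w => D v w)).card = (univ.filter (fun w => D w v)).card := by
  intro v
  have hle := card_inNeighbors_le_card_outNeighbors D irrefl friendship
  have hsum := (sum_card_outNeighbors_eq_sum_card_inNeighbors D).symm
  exact ((sum_eq_sum_iff_of_le fun u _ => hle u).1 hsum v (mem_univ v)).symm

/-- In a friendship digraph, every vertex `v` satisfies `d⁺(v) = d⁻(v)`. -/
theorem friendship_digraph_outdeg_eq_indeg
    {V : Type*} [Fintype V] [DecidableEq V] (D : V → V → Prop) [DecidableRel D]
    (irrefl : ∀ v : V, ¬ D v v)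
    (friendship : ∀ u v : V, u ≠ v → ∃! w : V, D u w ∧ D v w)
    (nontrivial : 1 < Fintype.card V) :
    ∀ v : V, (univ.filter (fun w => D v w)).card = (univ.filter (fun w => D w v)).card :=
  friendship_digraph_outdeg_eq_indeg_general D irrefl friendship
end

section
/- In a friendship digraph of order n, every vertex v satisfies ∑_{u ∈ N⁺(v)} (d⁻(u) − 1) = n − 1. -/
/-!
Fix `v`. Every `x ≠ v` has exactly one common out-neighbour with `v`, so the sets
`N⁻(u) \ {v}`, `u ∈ N⁺(v)`, partition `V \ {v}`; each has `d⁻(u) - 1` elements since `v ∈ N⁻(u)`.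
-/

open Finset

section

variable {V : Type*} [Fintype V] [DecidableEq V] {D : V → V → Prop} [DecidableRel D] {v : V}

lemma pairwiseDisjoint_inNeighbors_erase
    (unique : ∀ x, x ≠ v → ∃! w, D v w ∧ D x w) :
    (({w | D v w} : Finset V) : Set V).PairwiseDisjoint
      fun u => ({x | D x u} : Finset V).erase v := by
  intro u₁ hu₁ u₂ hu₂ hne
  simp only [coe_filter, mem_univ, true_and, Set.mem_ofPred_eq] at hu₁ hu₂
  refine disjoint_left.2 fun x hx₁ hx₂ => hne ?_
  simp only [mem_erase, mem_filter, mem_univ, true_and] at hx₁ hx₂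
  exact (unique x hx₁.1).unique ⟨hu₁, hx₁.2⟩ ⟨hu₂, hx₂.2⟩

lemma biUnion_inNeighbors_erase
    (exists_common : ∀ x, x ≠ v → ∃ w, D v w ∧ D x w) :
    ({w | D v w} : Finset V).biUnion (fun u => ({x | D x u} : Finset V).erase v) =
      univ.erase v := by
  ext x
  simp only [mem_biUnion, mem_erase, mem_filter, mem_univ, true_and, and_true]
  refine ⟨fun ⟨_, _, hxv, _⟩ => hxv, fun hxv => ?_⟩
  obtain ⟨w, hvw, hxw⟩ := exists_common x hxv
  exact ⟨w, hvw, hxv, hxw⟩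

lemma sum_card_inNeighbors_erase (unique : ∀ x, x ≠ v → ∃! w, D v w ∧ D x w) :
    ∑ u ∈ ({w | D v w} : Finset V), #(({x | D x u} : Finset V).erase v) =
      Fintype.card V - 1 := by
  rw [← card_biUnion (pairwiseDisjoint_inNeighbors_erase unique),
    biUnion_inNeighbors_erase fun x hx => (unique x hx).exists, card_erase_of_mem (mem_univ v),
    card_univ]

end

theorem friendship_digraph_sum_indeg_sub_one_general
    {V : Type*} [Fintype V] (D : V → V → Prop) [DecidableRel D]
    (friendship : ∀ u v : V, u ≠ v → ∃! w : V, D u w ∧ D v w) :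
    ∀ v : V, ∑ u ∈ univ.filter (fun w => D v w),
        ((univ.filter (fun x => D x u)).card - 1) = Fintype.card V - 1 := by
  classical
  intro v
  rw [← sum_card_inNeighbors_erase fun x hx => friendship v x hx.symm]
  refine sum_congr rfl fun u hu => ?_
  rw [card_erase_of_mem (mem_filter.2 ⟨mem_univ v, (mem_filter.1 hu).2⟩)]

/-- In a friendship digraph of order `n`, every vertex `v` satisfies
`∑_{u ∈ N⁺(v)} (d⁻(u) − 1) = n − 1`. -/
theorem friendship_digraph_sum_indeg_sub_one
    {V : Type*} [Fintype V] [DecidableEq V] (D : V → V → Prop) [DecidableRel D]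
    (irrefl : ∀ v : V, ¬ D v v)
    (friendship : ∀ u v : V, u ≠ v → ∃! w : V, D u w ∧ D v w)
    (nontrivial : 1 < Fintype.card V) :
    ∀ v : V, ∑ u ∈ univ.filter (fun w => D v w),
        ((univ.filter (fun x => D x u)).card - 1) = Fintype.card V - 1 :=
  friendship_digraph_sum_indeg_sub_one_general D friendship
end

section
/- If a friendship digraph D has a vertex v with N⁺(v) = V(D) − {v}, then every vertex other than v has out-degree exactly 2. -/
open Finset

/-!
Let `u ≠ v` and let `w` be the unique common out-neighbour of `u` and `v`. Since `v`
dominates, every out-neighbour of `u` other than `v` is a common out-neighbour of `u` and `v`,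
hence equals `w`. The common out-neighbour of `u` and `w` cannot be `w` (no loops), so it is
`v`: thus `N⁺(u) = {v, w}`.
-/

section DominatingVertex

variable {V : Type*} {D : V → V → Prop} {v : V}

theorem exists_common_out_neighbor_dominating
    (friendship : ∀ u v : V, u ≠ v → ∃! w : V, D u w ∧ D v w)
    (hv : ∀ w : V, D v w ↔ w ≠ v) {u : V} (hu : u ≠ v) :
    ∃ w, w ≠ v ∧ D u w ∧ ∀ x, D u x → x ≠ v → x = w := by
  obtain ⟨w, ⟨huw, hvw⟩, hw⟩ := friendship u v hu
  exact ⟨w, (hv w).mp hvw, huw, fun x hux hxv => hw x ⟨hux, (hv x).mpr hxv⟩⟩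

theorem adj_dominating_of_ne (irrefl : ∀ v : V, ¬ D v v)
    (friendship : ∀ u v : V, u ≠ v → ∃! w : V, D u w ∧ D v w)
    (hv : ∀ w : V, D v w ↔ w ≠ v) {u : V} (hu : u ≠ v) : D u v := by
  obtain ⟨w, -, huw, hw⟩ := exists_common_out_neighbor_dominating friendship hv hu
  have huw' : u ≠ w := fun h => irrefl u (h ▸ huw)
  obtain ⟨t, ⟨hut, hwt⟩, -⟩ := friendship u w huw'
  by_cases htv : t = v
  · exact htv ▸ hut
  · exact absurd (hw t hut htv ▸ hwt) (irrefl w)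

theorem exists_out_neighbors_eq_pair (irrefl : ∀ v : V, ¬ D v v)
    (friendship : ∀ u v : V, u ≠ v → ∃! w : V, D u w ∧ D v w)
    (hv : ∀ w : V, D v w ↔ w ≠ v) {u : V} (hu : u ≠ v) :
    ∃ w, w ≠ v ∧ ∀ x, D u x ↔ x = v ∨ x = w := by
  obtain ⟨w, hwv, huw, hw⟩ := exists_common_out_neighbor_dominating friendship hv hu
  refine ⟨w, hwv, fun x => ⟨fun hux => ?_, ?_⟩⟩
  · by_cases hxv : x = v
    · exact Or.inl hxv
    · exact Or.inr (hw x hux hxv)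
  · rintro (rfl | rfl)
    · exact adj_dominating_of_ne irrefl friendship hv hu
    · exact huw

end DominatingVertex

theorem friendship_digraph_dominating_vertex_general
    {V : Type*} [Fintype V] [DecidableEq V] (D : V → V → Prop) [DecidableRel D]
    (irrefl : ∀ v : V, ¬ D v v)
    (friendship : ∀ u v : V, u ≠ v → ∃! w : V, D u w ∧ D v w)
    (v : V) (hv : ∀ w : V, D v w ↔ w ≠ v) :
    ∀ u : V, u ≠ v → (univ.filter (fun w => D u w)).card = 2 := by
  intro u hu
  obtain ⟨w, hwv, hN⟩ := exists_out_neighbors_eq_pair irrefl friendship hv hu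
  have : univ.filter (fun x => D u x) = {v, w} := by
    ext x
    simp only [mem_filter, mem_univ, true_and, mem_insert, mem_singleton, hN]
  rw [this, card_pair hwv.symm]

/-- If a friendship digraph `D` has a vertex `v` with `N⁺(v) = V(D) − {v}`,
then every vertex other than `v` has out-degree exactly 2. -/
theorem friendship_digraph_dominating_vertex
    {V : Type*} [Fintype V] [DecidableEq V] (D : V → V → Prop) [DecidableRel D]
    (irrefl : ∀ v : V, ¬ D v v)
    (friendship : ∀ u v : V, u ≠ v → ∃! w : V, D u w ∧ D v w)
    (nontrivial : 1 < Fintype.card V)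
    (v : V) (hv : ∀ w : V, D v w ↔ w ≠ v) :
    ∀ u : V, u ≠ v → (univ.filter (fun w => D u w)).card = 2 :=
  friendship_digraph_dominating_vertex_general D irrefl friendship v hv
end

section
/- If D is a friendship digraph, then the reverse digraph D⁻ (obtained by reversing the direction of every arc) is also a friendship digraph; equivalently, in a friendship digraph any two distinct vertices have exactly one common in-neighbor. -/
/-!
Count ordered pairs of distinct vertices at their common neighbours. Since every such pair has
exactly one common out-neighbour, `n (n - 1) = ∑ w, d⁻(w) (d⁻(w) - 1)`. A pair has at most one
common in-neighbour (two of them would have both vertices of the pair as common out-neighbours),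
so `∑ w, d⁺(w) (d⁺(w) - 1) ≤ n (n - 1)`, with equality only if every pair has one. Finally
`d⁻(w) ≤ d⁺(w)`, because sending an in-neighbour `x` of `w` to the common out-neighbour of `x`
and `w` is injective (loops excluded). So the chain of inequalities is tight.
-/

open Finset

section

open scoped Classical

variable {V : Type*} {R : V → V → Prop}

def IsFriendship (R : V → V → Prop) : Prop :=
  ∀ u v, u ≠ v → ∃! w, R u w ∧ R v w

theorem IsFriendship.eq_of_common_in (hR : IsFriendship R) {u v w₁ w₂ : V} (huv : u ≠ v)
    (h₁ : R w₁ u ∧ R w₁ v) (h₂ : R w₂ u ∧ R w₂ v) : w₁ = w₂ := by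
  by_contra hw
  obtain ⟨z, -, hz⟩ := hR w₁ w₂ hw
  exact huv ((hz u ⟨h₁.1, h₂.1⟩).trans (hz v ⟨h₁.2, h₂.2⟩).symm)

theorem Finset.card_offDiag_le_card_offDiag {α β : Type*} [DecidableEq α] [DecidableEq β]
    {s : Finset α} {t : Finset β} (h : #s ≤ #t) : #s.offDiag ≤ #t.offDiag := by
  rw [offDiag_card, offDiag_card, ← Nat.mul_sub_one, ← Nat.mul_sub_one]
  exact Nat.mul_le_mul h (Nat.sub_le_sub_right h 1)

variable [Fintype V]

section Neighbourhoods

variable (R)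

noncomputable def commonOutNbrs (u v : V) : Finset V := {w | R u w ∧ R v w}

noncomputable def inNbrs (w : V) : Finset V := {u | R u w}

variable {R}

@[simp]
theorem mem_commonOutNbrs {u v w : V} : w ∈ commonOutNbrs R u v ↔ R u w ∧ R v w :=
  mem_filter_univ _

@[simp]
theorem mem_inNbrs {u w : V} : u ∈ inNbrs R w ↔ R u w :=
  mem_filter_univ _

variable (R) in
theorem sum_card_commonOutNbrs_eq_sum_card_offDiag_inNbrs :
    ∑ p ∈ (univ : Finset V).offDiag, #(commonOutNbrs R p.1 p.2) =
      ∑ w, #(inNbrs R w).offDiag := by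
  convert sum_card_bipartiteAbove_eq_sum_card_bipartiteBelow (s := univ.offDiag) (t := univ)
    (r := fun (p : V × V) w ↦ R p.1 w ∧ R p.2 w) using 3 with p _ w _
  · rfl
  · ext ⟨u, v⟩
    simp only [mem_offDiag, mem_inNbrs, bipartiteBelow, mem_filter, mem_univ, true_and]
    tauto

theorem isFriendship_iff_card_commonOutNbrs :
    IsFriendship R ↔ ∀ u v, u ≠ v → #(commonOutNbrs R u v) = 1 := by
  simp only [IsFriendship, card_eq_one_iff_existsUnique, mem_commonOutNbrs]

end Neighbourhoods

namespace IsFriendship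

theorem card_commonOutNbrs_flip_le_one (hR : IsFriendship R) {u v : V} (huv : u ≠ v) :
    #(commonOutNbrs (flip R) u v) ≤ 1 :=
  card_le_one.2 fun _ h₁ _ h₂ ↦
    hR.eq_of_common_in huv (mem_commonOutNbrs.1 h₁) (mem_commonOutNbrs.1 h₂)

theorem card_inNbrs_le_card_inNbrs_flip (hirr : ∀ v, ¬ R v v) (hR : IsFriendship R) (w : V) :
    #(inNbrs R w) ≤ #(inNbrs (flip R) w) := by
  refine card_le_card_of_forall_subsingleton R (fun x hx ↦ ?_) fun z hz x hx y hy ↦ ?_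
  · have hxw : R x w := mem_inNbrs.1 hx
    obtain ⟨z, hz, -⟩ := hR x w (fun h ↦ hirr w (h ▸ hxw))
    exact ⟨z, mem_inNbrs.2 hz.2, hz.1⟩
  · obtain ⟨hxw, hxz⟩ := hx
    obtain ⟨hyw, hyz⟩ := hy
    by_contra hxy
    have hwz : w = z := (hR x y hxy).unique ⟨mem_inNbrs.1 hxw, mem_inNbrs.1 hyw⟩ ⟨hxz, hyz⟩
    have hwz' : flip R z w := mem_inNbrs.1 hz
    exact hirr z (hwz ▸ hwz')

end IsFriendship

theorem isFriendship_flip (hirr : ∀ v, ¬ R v v) (hR : IsFriendship R) :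
    IsFriendship (flip R) := by
  have hle_one : ∀ p ∈ (univ : Finset V).offDiag, #(commonOutNbrs (flip R) p.1 p.2) ≤ 1 :=
    fun p hp ↦ hR.card_commonOutNbrs_flip_le_one (mem_offDiag.1 hp).2.2
  have hcount : ∑ p ∈ (univ : Finset V).offDiag, #(commonOutNbrs (flip R) p.1 p.2) =
      ∑ p ∈ (univ : Finset V).offDiag, 1 := by
    refine le_antisymm (sum_le_sum hle_one) ?_
    calc ∑ p ∈ (univ : Finset V).offDiag, 1
        = ∑ p ∈ (univ : Finset V).offDiag, #(commonOutNbrs R p.1 p.2) :=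
          sum_congr rfl fun p hp ↦
            (isFriendship_iff_card_commonOutNbrs.1 hR _ _ (mem_offDiag.1 hp).2.2).symm
      _ = ∑ w, #(inNbrs R w).offDiag := sum_card_commonOutNbrs_eq_sum_card_offDiag_inNbrs R
      _ ≤ ∑ w, #(inNbrs (flip R) w).offDiag := sum_le_sum fun w _ ↦
          card_offDiag_le_card_offDiag (hR.card_inNbrs_le_card_inNbrs_flip hirr w)
      _ = ∑ p ∈ (univ : Finset V).offDiag, #(commonOutNbrs (flip R) p.1 p.2) :=
          (sum_card_commonOutNbrs_eq_sum_card_offDiag_inNbrs (flip R)).symm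
  have hone := (sum_eq_sum_iff_of_le hle_one).1 hcount
  exact isFriendship_iff_card_commonOutNbrs.2 fun u v huv ↦ hone (u, v) (by simpa using huv)

end

theorem friendship_digraph_reverse_general
    {V : Type*} [Fintype V] (D : V → V → Prop)
    (irrefl : ∀ v : V, ¬ D v v)
    (friendship : ∀ u v : V, u ≠ v → ∃! w : V, D u w ∧ D v w) :
    ∀ u v : V, u ≠ v → ∃! w : V, D w u ∧ D w v :=
  isFriendship_flip irrefl friendship

/-- If `D` is a friendship digraph, then the reverse digraph is also a friendship
digraph: any two distinct vertices of `D` have exactly one common in-neighbor. -/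
theorem friendship_digraph_reverse
    {V : Type*} [Fintype V] [DecidableEq V] (D : V → V → Prop) [DecidableRel D]
    (irrefl : ∀ v : V, ¬ D v v)
    (friendship : ∀ u v : V, u ≠ v → ∃! w : V, D u w ∧ D v w)
    (nontrivial : 1 < Fintype.card V) :
    ∀ u v : V, u ≠ v → ∃! w : V, D w u ∧ D w v :=
  friendship_digraph_reverse_general D irrefl friendship
end

section
/- In a friendship digraph of order n, for any pair of distinct vertices u and v one has (d⁻(u) − 1)(d⁻(v) − 1) ≤ n − 2. -/
open Finset

/-!
Two distinct vertices `u ≠ v` have at most one common in-neighbour, since two such would share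
the two out-neighbours `u` and `v`. So at least `d⁻(u) - 1` in-neighbours of `u` miss `v`, and
at least `d⁻(v) - 1` in-neighbours of `v` miss `u`. Sending such a pair `(a, b)` to the common
out-neighbour of `a` and `b` is injective by the same uniqueness argument, and lands outside
`{u, v}`.
-/

namespace FriendshipDigraph

variable {V : Type*} {D : V → V → Prop}

def inNeighbors [Fintype V] (D : V → V → Prop) [DecidableRel D] (v : V) : Finset V :=
  univ.filter (fun x => D x v)

theorem eq_of_two_common_outNeighbors
    (friendship : ∀ u v : V, u ≠ v → ∃! w : V, D u w ∧ D v w)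
    {a b u v : V} (huv : u ≠ v) (hau : D a u) (hbu : D b u) (hav : D a v) (hbv : D b v) :
    a = b := by
  by_contra hab
  exact huv ((friendship a b hab).unique ⟨hau, hbu⟩ ⟨hav, hbv⟩)

variable [Fintype V] [DecidableEq V] [DecidableRel D]

theorem card_inNeighbors_sub_one_le_card_sdiff
    (friendship : ∀ u v : V, u ≠ v → ∃! w : V, D u w ∧ D v w) {u v : V} (huv : u ≠ v) :
    #(inNeighbors D u) - 1 ≤ #(inNeighbors D u \ inNeighbors D v) := by
  have hcommon : #(inNeighbors D v ∩ inNeighbors D u) ≤ 1 := by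
    refine card_le_one.2 fun a ha b hb => ?_
    simp only [inNeighbors, mem_inter, mem_filter, mem_univ, true_and] at ha hb
    exact eq_of_two_common_outNeighbors friendship huv ha.2 hb.2 ha.1 hb.1
  rw [card_sdiff]
  omega

theorem card_sdiff_mul_card_sdiff_le
    (friendship : ∀ u v : V, u ≠ v → ∃! w : V, D u w ∧ D v w) {u v : V} (huv : u ≠ v) :
    #(inNeighbors D u \ inNeighbors D v) * #(inNeighbors D v \ inNeighbors D u)
      ≤ Fintype.card V - 2 := by
  have : Nonempty V := ⟨u⟩
  choose! m hm using fun a b (hab : a ≠ b) => (friendship a b hab).exists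
  have hmem {p : V × V} (hp : p ∈ (inNeighbors D u \ inNeighbors D v) ×ˢ
      (inNeighbors D v \ inNeighbors D u)) :
      D p.1 u ∧ D p.2 v ∧ D p.1 (m p.1 p.2) ∧ D p.2 (m p.1 p.2) ∧
        m p.1 p.2 ≠ u ∧ m p.1 p.2 ≠ v := by
    simp only [mem_product, mem_sdiff, inNeighbors, mem_filter, mem_univ, true_and] at hp
    obtain ⟨⟨hau, hav⟩, hbv, hbu⟩ := hp
    obtain ⟨haw, hbw⟩ := hm p.1 p.2 fun h => hav (h ▸ hbv)
    exact ⟨hau, hbv, haw, hbw, fun h => hbu (h ▸ hbw), fun h => hav (h ▸ haw)⟩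
  rw [← card_product, ← card_pair huv, ← card_compl]
  refine card_le_card_of_injOn (fun p => m p.1 p.2) (fun p hp => ?_) (fun p hp q hq hpq => ?_)
  · obtain ⟨-, -, -, -, hwu, hwv⟩ := hmem hp
    simp only [coe_compl, coe_pair, Set.mem_compl_iff, Set.mem_insert_iff,
      Set.mem_singleton_iff, not_or]
    exact ⟨hwu, hwv⟩
  · obtain ⟨hau, hbv, haw, hbw, hwu, hwv⟩ := hmem hp
    obtain ⟨hau', hbv', haw', hbw', -⟩ := hmem hq
    simp only at hpq
    rw [← hpq] at haw' hbw'
    exact Prod.ext (eq_of_two_common_outNeighbors friendship hwu haw haw' hau hau')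
      (eq_of_two_common_outNeighbors friendship hwv hbw hbw' hbv hbv')

end FriendshipDigraph

theorem friendship_digraph_indeg_product_bound_general
    {V : Type*} [Fintype V] (D : V → V → Prop) [DecidableRel D]
    (friendship : ∀ u v : V, u ≠ v → ∃! w : V, D u w ∧ D v w) :
    ∀ u v : V, u ≠ v →
      ((univ.filter (fun x => D x u)).card - 1) * ((univ.filter (fun x => D x v)).card - 1)
        ≤ Fintype.card V - 2 := by
  classical
  intro u v huv
  have hu := FriendshipDigraph.card_inNeighbors_sub_one_le_card_sdiff friendship huv
  have hv := FriendshipDigraph.card_inNeighbors_sub_one_le_card_sdiff friendship huv.symm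
  exact (Nat.mul_le_mul hu hv).trans
    (FriendshipDigraph.card_sdiff_mul_card_sdiff_le friendship huv)

/-- In a friendship digraph of order `n`, for any pair of distinct vertices
`u` and `v` one has `(d⁻(u) − 1)(d⁻(v) − 1) ≤ n − 2`. -/
theorem friendship_digraph_indeg_product_bound
    {V : Type*} [Fintype V] [DecidableEq V] (D : V → V → Prop) [DecidableRel D]
    (irrefl : ∀ v : V, ¬ D v v)
    (friendship : ∀ u v : V, u ≠ v → ∃! w : V, D u w ∧ D v w)
    (nontrivial : 1 < Fintype.card V) :
    ∀ u v : V, u ≠ v →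
      ((univ.filter (fun x => D x u)).card - 1) * ((univ.filter (fun x => D x v)).card - 1)
        ≤ Fintype.card V - 2 :=
  friendship_digraph_indeg_product_bound_general D friendship
end

section
/- Let k ≥ 2 be an integer. If there exists a (k² − k + 1, k, 1)-SBIBD, then there exists a k-regular friendship digraph (necessarily of order k² − k + 1). -/
/-!
Non-incidence between points and blocks of a `(v, k, 1)`-SBIBD with `v = k² - k + 1` is a
`(v - k)`-regular bipartite relation, and `v - k = (k - 1)² > 0`, so by Hall's theorem it has a
perfect matching: a bijection `σ` from points to blocks with `p ∉ B (σ p)`. Joining `u` to the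
points of `B (σ u)` gives a loopless `k`-regular digraph. Its friendship property is the dual of
`λ = 1`: two distinct blocks meet in exactly one point, since the `k (k - 1)` other blocks through
the points of a block each meet it at most once.
-/

open Finset Function

theorem exists_injective_of_card_filter_le {α β : Type*} [Fintype α] [Fintype β]
    (r : α → β → Prop) [DecidableRel r] {d : ℕ} (hd : 0 < d)
    (hleft : ∀ a, d ≤ #{b | r a b}) (hright : ∀ b, #{a | r a b} ≤ d) :
    ∃ f : α → β, Injective f ∧ ∀ a, r a (f a) := by
  -- Hall's condition: double count the pairs related between `A` and its neighbourhood `T`.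
  refine (Fintype.all_card_le_filter_rel_iff_exists_injective r).1 fun A => ?_
  set T : Finset β := {b | ∃ a ∈ A, r a b}
  refine Nat.le_of_mul_le_mul_right (card_mul_le_card_mul r (s := A) (t := T) ?_ ?_) hd
  · intro a ha
    convert hleft a using 2
    ext b
    simpa [bipartiteAbove, T] using fun hab => ⟨a, ha, hab⟩
  · exact fun b _ => (card_le_card (filter_subset_filter _ (subset_univ A))).trans (hright b)

section Blocks

variable {P ι : Type*} [DecidableEq P] {B : ι → Finset P}

theorem card_inter_le_one_of_existsUnique
    (hpair : ∀ p q : P, p ≠ q → ∃! i, p ∈ B i ∧ q ∈ B i) {i j : ι} (hij : i ≠ j) :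
    #(B i ∩ B j) ≤ 1 := by
  refine card_le_one.2 fun p hp q hq => ?_
  by_contra hpq
  rw [mem_inter] at hp hq
  exact hij ((hpair p q hpq).unique ⟨hp.1, hq.1⟩ ⟨hp.2, hq.2⟩)

variable [Fintype ι]

theorem exists_equiv_forall_notMem [Fintype P] {k : ℕ}
    (hcard : Fintype.card P = Fintype.card ι) (hk : k < Fintype.card ι)
    (hsize : ∀ i, #(B i) = k) (hrep : ∀ p, #{i | p ∈ B i} = k) :
    ∃ σ : P ≃ ι, ∀ p, p ∉ B (σ p) := by
  have houtside : ∀ p, Fintype.card ι - k ≤ #{i | p ∉ B i} := fun p => by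
    have := card_filter_add_card_filter_not (s := univ) (fun i => p ∈ B i)
    rw [card_univ, hrep] at this
    omega
  have hmissed : ∀ i, #{p | p ∉ B i} ≤ Fintype.card ι - k := fun i => by
    have := card_filter_add_card_filter_not (s := univ) (fun p => p ∈ B i)
    rw [card_univ, filter_mem_eq_inter, univ_inter, hsize] at this
    omega
  obtain ⟨σ, hinj, hσ⟩ :=
    exists_injective_of_card_filter_le (fun p i => p ∉ B i) (by omega) houtside hmissed
  exact ⟨.ofBijective σ ((Fintype.bijective_iff_injective_and_card σ).2 ⟨hinj, hcard⟩), hσ⟩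

variable [DecidableEq ι]

theorem sum_card_inter_erase {r : ℕ} (hrep : ∀ p, #{i | p ∈ B i} = r) (i : ι) :
    ∑ j ∈ univ.erase i, #(B i ∩ B j) = #(B i) * (r - 1) := by
  have habove : ∀ p ∈ B i, #((univ.erase i).bipartiteAbove (fun p j => p ∈ B j) p) = r - 1 := by
    intro p hp
    rw [bipartiteAbove, filter_erase, card_erase_of_mem (by simpa using hp), hrep]
  calc ∑ j ∈ univ.erase i, #(B i ∩ B j)
      = ∑ j ∈ univ.erase i, #((B i).bipartiteBelow (fun p j => p ∈ B j) j) := by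
        simp only [bipartiteBelow, filter_mem_eq_inter]
    _ = ∑ p ∈ B i, #((univ.erase i).bipartiteAbove (fun p j => p ∈ B j) p) :=
        (sum_card_bipartiteAbove_eq_sum_card_bipartiteBelow _).symm
    _ = #(B i) * (r - 1) := by rw [sum_congr rfl habove, sum_const, smul_eq_mul]

theorem card_inter_eq_one_of_symmetric {k : ℕ} (hι : Fintype.card ι = k ^ 2 - k + 1)
    (hsize : ∀ i, #(B i) = k) (hrep : ∀ p, #{i | p ∈ B i} = k)
    (hpair : ∀ p q : P, p ≠ q → ∃! i, p ∈ B i ∧ q ∈ B i) {i j : ι} (hij : i ≠ j) :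
    #(B i ∩ B j) = 1 := by
  have hle : ∀ m ∈ univ.erase i, #(B i ∩ B m) ≤ 1 := fun m hm =>
    card_inter_le_one_of_existsUnique hpair (ne_of_mem_erase hm).symm
  have hsum : ∑ m ∈ univ.erase i, #(B i ∩ B m) = ∑ m ∈ univ.erase i, 1 := by
    rw [sum_card_inter_erase hrep, hsize, sum_const, card_erase_of_mem (mem_univ i), card_univ,
      hι, smul_eq_mul, mul_one, Nat.add_sub_cancel, Nat.mul_sub_one, sq]
  exact (sum_eq_sum_iff_of_le hle).1 hsum j (mem_erase.2 ⟨hij.symm, mem_univ j⟩)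

end Blocks

/-- For an integer `k ≥ 2`, if there exists a `(k² − k + 1, k, 1)`-SBIBD,
then there exists a `k`-regular friendship digraph (necessarily of order `k² − k + 1`). -/
theorem SBIBD_gives_regular_friendship_digraph
    (k : ℕ) (hk : 2 ≤ k)
    (hSBIBD : ∃ (P ι : Type) (B : ι → Finset P),
      Nat.card P = k ^ 2 - k + 1 ∧ Nat.card ι = k ^ 2 - k + 1 ∧
      (∀ i : ι, (B i).card = k) ∧
      (∀ p : P, {i : ι | p ∈ B i}.ncard = k) ∧
      (∀ p q : P, p ≠ q → ∃! i : ι, p ∈ B i ∧ q ∈ B i)) :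
    ∃ (V : Type) (D : V → V → Prop),
      Nat.card V = k ^ 2 - k + 1 ∧
      (∀ v : V, ¬ D v v) ∧
      (∀ v : V, {w : V | D v w}.ncard = k ∧ {w : V | D w v}.ncard = k) ∧
      (∀ u v : V, u ≠ v → ∃! w : V, D u w ∧ D v w) := by
  classical
  obtain ⟨P, ι, B, hP, hι, hsize, hrep, hpair⟩ := hSBIBD
  have : Finite P := Nat.finite_of_card_ne_zero (by omega)
  have : Finite ι := Nat.finite_of_card_ne_zero (by omega)
  have := Fintype.ofFinite P
  have := Fintype.ofFinite ι
  rw [Nat.card_eq_fintype_card] at hP hι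
  have hrep' : ∀ p, #{i | p ∈ B i} = k := fun p => by
    rw [← hrep p, ← Set.ncard_coe_finset, coe_filter]
    simp only [mem_univ, true_and]
  have hkι : k < Fintype.card ι := by
    have := Nat.mul_le_mul_right k hk
    rw [hι, sq]
    omega
  obtain ⟨σ, hσ⟩ := exists_equiv_forall_notMem (hP.trans hι.symm) hkι hsize hrep'
  refine ⟨P, fun u w => w ∈ B (σ u), Nat.card_eq_fintype_card.trans hP, hσ, fun v => ⟨?_, ?_⟩,
    fun u v huv => ?_⟩
  · simpa using hsize (σ v)
  · rw [← hrep v]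
    exact Set.ncard_preimage_of_injective_subset_range (s := {i | v ∈ B i}) σ.injective (by simp)
  · obtain ⟨a, ha⟩ := card_eq_one.1 (card_inter_eq_one_of_symmetric hι hsize hrep' hpair
      (σ.injective.ne huv))
    simpa only [← mem_inter, ha, mem_singleton] using existsUnique_eq
end

section
/- For every prime power q (q = pᵐ with p prime and m a positive integer), setting k = q + 1, there exists a k-regular friendship digraph of order k² − k + 1 = q² + q + 1. -/
/-!
Take a finite projective plane of order `n`. By Hall's theorem there is a bijection `e` from
points to lines with no point on its own line; join `v` to every point of the line `e v`.
Each vertex then has out-degree `n + 1` (points on a line) and in-degree `n + 1` (lines through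
a point), no vertex is joined to itself, and two distinct vertices have as common out-neighbours
exactly the intersection of two distinct lines, a single point. The plane over `GF(q)` has
order `q` and `q² + q + 1` points.
-/

open Configuration
open scoped LinearAlgebra.Projectivization

namespace Configuration.ProjectivePlane

variable (P L : Type*) [Membership P L] [ProjectivePlane P L] [Finite P] [Finite L]

theorem exists_equiv_forall_not_mem : ∃ e : P ≃ L, ∀ p, p ∉ e p := by
  classical
  have := Fintype.ofFinite P
  have := Fintype.ofFinite L
  obtain ⟨f, hf_inj, hf⟩ :=
    Nondegenerate.exists_injective_of_card_le (card_points_eq_card_lines P L).ge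
  have hf_bij : Function.Bijective f :=
    (Fintype.bijective_iff_injective_and_card f).2 ⟨hf_inj, (card_points_eq_card_lines P L).symm⟩
  refine ⟨(Equiv.ofBijective f hf_bij).symm, fun p => ?_⟩
  simpa only [Equiv.ofBijective_apply_symm_apply] using hf ((Equiv.ofBijective f hf_bij).symm p)

theorem exists_regular_friendship_digraph :
    ∃ D : P → P → Prop, (∀ v, ¬ D v v) ∧
      (∀ v, {w | D v w}.ncard = order P L + 1 ∧ {w | D w v}.ncard = order P L + 1) ∧
      ∀ u v, u ≠ v → ∃! w, D u w ∧ D v w := by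
  obtain ⟨e, he⟩ := exists_equiv_forall_not_mem P L
  refine ⟨fun v w => w ∈ e v, he, fun v => ⟨?_, ?_⟩, fun u v huv => ?_⟩
  · exact pointCount_eq P (e v)
  · rw [← Nat.card_coe_set_eq, ← lineCount_eq L v]
    exact Nat.card_congr (e.subtypeEquiv fun _ => Iff.rfl)
  · exact HasPoints.existsUnique_point P L (e u) (e v) (e.injective.ne huv)

theorem nat_card_points : Nat.card P = order P L ^ 2 + order P L + 1 := by
  have := Fintype.ofFinite P
  rw [Nat.card_eq_fintype_card, card_points P L]

end Configuration.ProjectivePlane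

namespace Configuration.ofField

variable (K : Type*) [Field K] [Finite K]

theorem nat_card_points : Nat.card (ℙ K (Fin 3 → K)) = Nat.card K ^ 2 + Nat.card K + 1 := by
  rw [Projectivization.card_of_finrank K (Fin 3 → K) (Module.finrank_fin_fun K)]
  simp only [Finset.sum_range_succ, Finset.sum_range_zero]
  ring

theorem order_eq [DecidableEq K] :
    ProjectivePlane.order (ℙ K (Fin 3 → K)) (ℙ K (Fin 3 → K)) = Nat.card K := by
  have h := (ProjectivePlane.nat_card_points (ℙ K (Fin 3 → K)) (ℙ K (Fin 3 → K))).symm.trans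
    (nat_card_points K)
  have hmono : StrictMono fun n : ℕ => n ^ 2 + n + 1 := fun a b hab => by
    have := Nat.pow_lt_pow_left hab two_ne_zero
    dsimp only
    omega
  exact hmono.injective h

end Configuration.ofField

/-- For every prime power `q = p^m` (`p` prime, `m ≥ 1`) and `k = q + 1`,
there exists a `k`-regular friendship digraph of order `k² − k + 1 = q² + q + 1`. -/
theorem prime_power_gives_regular_friendship_digraph
    (p m : ℕ) (hp : p.Prime) (hm : 0 < m) :
    ∃ (V : Type) (D : V → V → Prop),
      Nat.card V = (p ^ m + 1) ^ 2 - (p ^ m + 1) + 1 ∧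
      Nat.card V = (p ^ m) ^ 2 + p ^ m + 1 ∧
      (∀ v : V, ¬ D v v) ∧
      (∀ v : V, {w : V | D v w}.ncard = p ^ m + 1 ∧ {w : V | D w v}.ncard = p ^ m + 1) ∧
      (∀ u v : V, u ≠ v → ∃! w : V, D u w ∧ D v w) := by
  classical
  have := Fact.mk hp
  let K := GaloisField p m
  have hK : Nat.card K = p ^ m := GaloisField.card p m hm.ne'
  obtain ⟨D, hirrefl, hregular, hfriendship⟩ :=
    ProjectivePlane.exists_regular_friendship_digraph (ℙ K (Fin 3 → K)) (ℙ K (Fin 3 → K))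
  rw [ofField.order_eq, hK] at hregular
  have hcard : Nat.card (ℙ K (Fin 3 → K)) = (p ^ m) ^ 2 + p ^ m + 1 := by
    rw [ofField.nat_card_points, hK]
  refine ⟨_, D, ?_, hcard, hirrefl, hregular, hfriendship⟩
  have : (p ^ m + 1) ^ 2 = (p ^ m) ^ 2 + p ^ m + (p ^ m + 1) := by ring
  omega
end
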